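/- arXiv:cs/0608074 — 4 statements merged into one kernel-verified Lean document; each statement's English description precedes it below -/
import Mathlib

section
/- Let G be a finite simple graph, let T and T' be rotation systems on G, let ab be an edge of G, and let α be an automorphism of G satisfying T'(x,y,z) ↔ T(α(x), α(y), α(z)) for all vertices x, y, z (i.e., α is an isomorphism from ⟨G,T'⟩ onto ⟨G,T⟩). If T and T' are a-coherent (i.e., T(a,y,z) ↔ T'(a,y,z) for all y, z) and α fixes both a and b, then α fixes every vertex in the neighborhood Γ(a). -/
/-- A rotation system on a simple graph `G`: a ternary relation `T` on the vertices
such that `T a b c` implies `b` and `c` are neighbors of `a`, and for every vertex `a`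
the binary relation `T a · ·` is the graph of a permutation of the neighborhood of `a`
acting transitively on it (a single directed cycle through all of `Γ(a)`). -/
structure IsRotationSystem {V : Type*} (G : SimpleGraph V) (T : V → V → V → Prop) : Prop where
  adj_left : ∀ a b c, T a b c → G.Adj a b
  adj_right : ∀ a b c, T a b c → G.Adj a c
  existsUnique_succ : ∀ a b, G.Adj a b → ∃! c, T a b c
  existsUnique_pred : ∀ a c, G.Adj a c → ∃! b, T a b c
  single_cycle : ∀ a b c, G.Adj a b → G.Adj a c →
    Relation.ReflTransGen (fun x y => T a x y) b c

/-- Let `T`, `T'` be rotation systems on `G`, `ab` an edge of `G`, and `α` an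
automorphism of `G` which is an isomorphism from `⟨G,T'⟩` onto `⟨G,T⟩`
(i.e. `T' x y z ↔ T (α x) (α y) (α z)`). If `T` and `T'` are `a`-coherent
and `α` fixes both `a` and `b`, then `α` fixes every vertex in `Γ(a)`. -/
theorem coherent_fix_neighborhood {V : Type*} [Fintype V] (G : SimpleGraph V)
    (T T' : V → V → V → Prop)
    (hT : IsRotationSystem G T) (hT' : IsRotationSystem G T')
    (a b : V) (hab : G.Adj a b) (α : G ≃g G)
    (hiso : ∀ x y z : V, T' x y z ↔ T (α x) (α y) (α z))
    (hcoh : ∀ y z : V, T a y z ↔ T' a y z)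
    (ha : α a = a) (hb : α b = b) :
    ∀ v : V, G.Adj a v → α v = v := by
  intro v hav
  have hreach := hT.single_cycle a b v hab hav
  induction hreach with
  | refl => exact hb
  | tail _ hstep ih =>
    rename_i x y _
    have hax : G.Adj a x := hT.adj_left a x y hstep
    have h1 : T' a x y := (hcoh x y).mp hstep
    have h2 : T a x (α y) := by
      have := (hiso a x y).mp h1
      rwa [ha, ih hax] at this
    obtain ⟨c, _, hu⟩ := hT.existsUnique_succ a x hax
    exact (hu _ h2).trans (hu _ hstep).symm
end

section
/- Let G be a finite connected simple graph, T a rotation system on G, and α an automorphism of G satisfying T(x,y,z) ↔ T(α(x), α(y), α(z)) for all vertices x, y, z (i.e., α is an automorphism of the rotation system ⟨G,T⟩). If α fixes two adjacent vertices of G, then α is the identity. -/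
/-- Let `G` be a finite connected graph, `T` a rotation system on `G`, and `α` an
automorphism of `G` preserving `T` (i.e. `T x y z ↔ T (α x) (α y) (α z)`).
If `α` fixes two adjacent vertices, then `α` is the identity. -/
theorem rotation_automorphism_fixing_edge_eq_id {V : Type*} [Fintype V]
    (G : SimpleGraph V) (hconn : G.Connected)
    (T : V → V → V → Prop) (hT : IsRotationSystem G T) (α : G ≃g G)
    (hpres : ∀ x y z : V, T x y z ↔ T (α x) (α y) (α z))
    (a b : V) (hab : G.Adj a b) (ha : α a = a) (hb : α b = b) :
    ∀ v : V, α v = v := by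
  -- Key: if α fixes v and a neighbor w of v, then α fixes every neighbor of v.
  have key : ∀ v w, α v = v → α w = w → G.Adj v w → ∀ u, G.Adj v u → α u = u := by
    intro v w hv hw hvw u hvu
    have hc := hT.single_cycle v w u hvw hvu
    induction hc with
    | refl => exact hw
    | @tail m u' _ hTmu ih =>
      have h1 : T (α v) (α m) (α u') := (hpres v m u').mp hTmu
      rw [hv, ih (hT.adj_left v m u' hTmu)] at h1
      exact (hT.existsUnique_succ v m (hT.adj_left v m u' hTmu)).unique h1 hTmu
  -- Q v : α fixes v and all its neighbors
  have step : ∀ v u, (α v = v ∧ ∀ x, G.Adj v x → α x = x) → G.Adj v u →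
      (α u = u ∧ ∀ x, G.Adj u x → α x = x) := by
    intro v u ⟨hv, hvN⟩ hvu
    have hu : α u = u := hvN u hvu
    exact ⟨hu, fun x hx => key u v hu hv hvu.symm x hx⟩
  have walkprop : ∀ (s t : V) (p : G.Walk s t),
      (α s = s ∧ ∀ x, G.Adj s x → α x = x) → (α t = t ∧ ∀ x, G.Adj t x → α x = x) := by
    intro s t p
    induction p with
    | nil => exact id
    | cons h _ ih => exact fun hs => ih (step _ _ hs h)
  intro v
  obtain ⟨p⟩ := hconn.preconnected a v
  exact (walkprop a v p ⟨ha, fun x hx => key a b ha hb hab x hx⟩).1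
end

section
/- Let G be a finite connected simple graph with at least one edge. Let ℛ be a finite set of rotation systems on G and let R₁ ∈ ℛ be such that for every automorphism α of G the pullback R₁^α belongs to ℛ. Then G has a fixing set of cardinality at most 2·|ℛ|; in particular, rig(G) ≤ 2·|ℛ|. -/
/-- A set `S` of vertices of `G` is a fixing set if the identity is the only
automorphism of `G` fixing every vertex of `S`. -/
def IsFixingSet {V : Type*} (G : SimpleGraph V) (S : Set V) : Prop :=
  ∀ α : G ≃g G, (∀ v ∈ S, α v = v) → ∀ v : V, α v = v

/-- The rigidity index `rig G`: the minimum cardinality of a fixing set of `G`. -/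
noncomputable def rigidityIndex {V : Type*} [Fintype V] (G : SimpleGraph V) : ℕ :=
  sInf {n : ℕ | ∃ S : Finset V, S.card = n ∧ IsFixingSet G (S : Set V)}

section Aux

variable {V : Type*} {G : SimpleGraph V}

/-- An automorphism preserving a rotation system which fixes a vertex `v` and one of
its neighbors `w` fixes every neighbor of `v`. -/
private lemma rot_fix_neighbors {R : V → V → V → Prop} (hR : IsRotationSystem G R)
    (α : G ≃g G) (hpres : ∀ x y z, R x y z → R (α x) (α y) (α z))
    {v w : V} (hvw : G.Adj v w) (hv : α v = v) (hw : α w = w)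
    {u : V} (hvu : G.Adj v u) : α u = u := by
  have hcyc : Relation.ReflTransGen (fun x y => R v x y) w u :=
    hR.single_cycle v w u hvw hvu
  clear hvu
  induction hcyc with
  | refl => exact hw
  | tail hsteps hstep ih =>
      rename_i c d
      have hc : α c = c := ih
      have hadj : G.Adj v c := hR.adj_left v c d hstep
      have h1 : R v c (α d) := by
        have := hpres v c d hstep
        rwa [hv, hc] at this
      exact (hR.existsUnique_succ v c hadj).unique h1 hstep

/-- An automorphism of a connected graph preserving a rotation system and fixing
both endpoints of an edge is the identity. -/
private lemma rot_fix_all {R : V → V → V → Prop} (hR : IsRotationSystem G R)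
    (hconn : G.Connected) (α : G ≃g G)
    (hpres : ∀ x y z, R x y z → R (α x) (α y) (α z))
    {a b : V} (hab : G.Adj a b) (ha : α a = a) (hb : α b = b) :
    ∀ v, α v = v := by
  have step : ∀ {x u : V}, (α x = x ∧ ∀ t, G.Adj x t → α t = t) → G.Adj x u →
      (α u = u ∧ ∀ t, G.Adj u t → α t = t) := by
    intro x u hx hxu
    have hu : α u = u := hx.2 u hxu
    exact ⟨hu, fun t ht => rot_fix_neighbors hR α hpres hxu.symm hu hx.1 ht⟩
  have walk : ∀ ⦃x y : V⦄ (_ : G.Walk x y),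
      (α x = x ∧ ∀ t, G.Adj x t → α t = t) →
      (α y = y ∧ ∀ t, G.Adj y t → α t = t) := by
    intro x y p
    induction p with
    | nil => exact id
    | cons h q ih => intro hx; exact ih (step hx h)
  have hPa : α a = a ∧ ∀ t, G.Adj a t → α t = t :=
    ⟨ha, fun t ht => rot_fix_neighbors hR α hpres hab ha hb ht⟩
  intro v
  obtain ⟨p⟩ := hconn.preconnected a v
  exact (walk p hPa).1

/-- Iteratively shrinking the pointwise stabilizer: if at most `n + 1` automorphisms
fix every vertex of `S`, then `S` can be extended by at most `n` vertices to a fixing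
set. -/
private lemma exists_fixing_extension [DecidableEq V] (hfinA : Finite (G ≃g G)) :
    ∀ n : ℕ, ∀ S : Finset V,
      ({α : G ≃g G | ∀ v ∈ S, α v = v}).ncard ≤ n + 1 →
      ∃ T : Finset V, T.card ≤ S.card + n ∧ IsFixingSet G (T : Set V) := by
  intro n
  induction n with
  | zero =>
      intro S hS
      refine ⟨S, by simp, ?_⟩
      intro α hα v
      have hid : (RelIso.refl G.Adj : G ≃g G) ∈ {α : G ≃g G | ∀ v ∈ S, α v = v} := by
        intro v _; rfl
      have hmem : α ∈ {α : G ≃g G | ∀ v ∈ S, α v = v} := by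
        intro v hv; exact hα v (by simpa using hv)
      have := (Set.ncard_le_one (Set.toFinite _)).mp hS α hmem (RelIso.refl G.Adj) hid
      rw [this]; rfl
  | succ n ih =>
      intro S hS
      by_cases hfix : IsFixingSet G (S : Set V)
      · exact ⟨S, by omega, hfix⟩
      · simp only [IsFixingSet, not_forall] at hfix
        obtain ⟨α, hαS, v, hv⟩ := hfix
        have hsub : {β : G ≃g G | ∀ u ∈ insert v S, β u = u} ⊂
            {β : G ≃g G | ∀ u ∈ S, β u = u} := by
          constructor
          · intro β hβ u hu
            exact hβ u (Finset.mem_insert_of_mem hu)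
          · intro hcon
            have hαmem : α ∈ {β : G ≃g G | ∀ u ∈ S, β u = u} := by
              intro u hu; exact hαS u (by simpa using hu)
            have := hcon hαmem v (Finset.mem_insert_self v S)
            exact hv this
        have hlt := Set.ncard_lt_ncard hsub (Set.toFinite _)
        have hcard : ({β : G ≃g G | ∀ u ∈ insert v S, β u = u}).ncard ≤ n + 1 := by
          omega
        obtain ⟨T, hT, hTfix⟩ := ih (insert v S) hcard
        refine ⟨T, ?_, hTfix⟩
        have := Finset.card_insert_le v S
        omega

end Aux

/-- Let `G` be a finite connected graph with at least one edge, `ℛ` a finite set of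
rotation systems on `G`, and `R₁ ∈ ℛ` such that for every automorphism `α` of `G`
the pullback `R₁^α` belongs to `ℛ`. Then `G` has a fixing set of cardinality at most
`2·|ℛ|`; in particular `rig G ≤ 2·|ℛ|`. -/
theorem fixing_set_of_closed_family_of_rotation_systems {V : Type*} [Fintype V]
    (G : SimpleGraph V) (hconn : G.Connected) (hedge : ∃ a b : V, G.Adj a b)
    (ℛ : Set (V → V → V → Prop)) (hfin : ℛ.Finite)
    (hrot : ∀ R ∈ ℛ, IsRotationSystem G R)
    (R₁ : V → V → V → Prop) (hR₁ : R₁ ∈ ℛ)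
    (hclosed : ∀ α : G ≃g G,
      (fun a b c => R₁ (α.symm a) (α.symm b) (α.symm c)) ∈ ℛ) :
    (∃ S : Finset V, S.card ≤ 2 * ℛ.ncard ∧ IsFixingSet G (S : Set V)) ∧
      rigidityIndex G ≤ 2 * ℛ.ncard := by
  classical
  have hfinAut : Finite (G ≃g G) :=
    Finite.of_injective (fun α : G ≃g G => (α : V → V))
      (fun a b h => RelIso.ext (congrFun h))
  obtain ⟨a, b, hab⟩ := hedge
  have hRrot : IsRotationSystem G R₁ := hrot R₁ hR₁
  set k := ℛ.ncard with hk
  have hk1 : 1 ≤ k := (Set.ncard_pos hfin).mpr ⟨R₁, hR₁⟩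
  -- the set of automorphisms fixing a and b
  set A : Set (G ≃g G) := {α | α a = a ∧ α b = b} with hA
  set F : (G ≃g G) → (V → V → V → Prop) :=
    fun α => fun x y z => R₁ (α.symm x) (α.symm y) (α.symm z) with hF
  have hinj : Set.InjOn F A := by
    intro α hα β hβ heq
    set γ : G ≃g G := β.trans α.symm with hγ
    have hγap : ∀ x, γ x = α.symm (β x) := fun x => rfl
    have key : ∀ x y z, R₁ (γ x) (γ y) (γ z) = R₁ x y z := by
      intro x y z
      have h1 := congrFun (congrFun (congrFun heq (β x)) (β y)) (β z)
      simp only [hF] at h1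
      simpa [hγap, RelIso.symm_apply_apply] using h1
    have hpres : ∀ x y z, R₁ x y z → R₁ (γ x) (γ y) (γ z) :=
      fun x y z h => (iff_of_eq (key x y z)).mpr h
    have hsymm_fix : ∀ x, α x = x → α.symm x = x := by
      intro x hx
      conv_lhs => rw [← hx]
      exact RelIso.symm_apply_apply α x
    have hγa : γ a = a := by rw [hγap, hβ.1, hsymm_fix a hα.1]
    have hγb : γ b = b := by rw [hγap, hβ.2, hsymm_fix b hα.2]
    have hall := rot_fix_all hRrot hconn γ hpres hab hγa hγb
    apply RelIso.ext
    intro x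
    have := hall x
    rw [hγap] at this
    calc α x = α (α.symm (β x)) := by rw [this]
    _ = β x := RelIso.apply_symm_apply α (β x)
  have himg : F '' A ⊆ ℛ := by
    rintro _ ⟨α, _, rfl⟩
    exact hclosed α
  have hAcard : A.ncard ≤ k := by
    rw [← Set.ncard_image_of_injOn hinj]
    exact Set.ncard_le_ncard himg hfin
  -- the stabilizer of {a,b} is contained in A
  have hsub : {α : G ≃g G | ∀ v ∈ ({a, b} : Finset V), α v = v} ⊆ A := by
    intro α hα
    exact ⟨hα a (by simp), hα b (by simp)⟩
  have hScard : ({α : G ≃g G | ∀ v ∈ ({a, b} : Finset V), α v = v}).ncard ≤ (k - 1) + 1 := by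
    have := Set.ncard_le_ncard hsub (Set.toFinite _)
    omega
  obtain ⟨T, hTcard, hTfix⟩ := exists_fixing_extension hfinAut (k - 1) {a, b} hScard
  have habcard : ({a, b} : Finset V).card ≤ 2 := Finset.card_le_two
  have hT2k : T.card ≤ 2 * k := by omega
  refine ⟨⟨T, hT2k, hTfix⟩, ?_⟩
  have : rigidityIndex G ≤ T.card := Nat.sInf_le ⟨T, rfl, hTfix⟩
  omega
end

section
/- Let G be a finite connected simple graph and T a rotation system on G such that for every automorphism α of G, the pullback T^α equals T or equals the conjugate T*. Suppose v is a vertex with at least 3 neighbors and u, w are neighbors of v with T(v,u,w). Then every automorphism of G that fixes u, v and w is the identity; in particular, {u, v, w} is a fixing set and rig(G) ≤ 3. -/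
/-- Let `G` be a finite connected graph and `T` a rotation system on `G` such that for
every automorphism `α` of `G` the pullback `T^α` equals `T` or its conjugate `T*`.
If `v` has at least `3` neighbors and `u`, `w` are neighbors of `v` with `T v u w`,
then every automorphism fixing `u`, `v`, `w` is the identity; in particular
`{u, v, w}` is a fixing set and `rig G ≤ 3`. -/
theorem fixing_set_of_faithful_rotation_system {V : Type*} [Fintype V]
    (G : SimpleGraph V) (hconn : G.Connected)
    (T : V → V → V → Prop) (hT : IsRotationSystem G T)
    (hfaithful : ∀ α : G ≃g G,
      (fun a b c => T (α.symm a) (α.symm b) (α.symm c)) = T ∨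
      (fun a b c => T (α.symm a) (α.symm b) (α.symm c)) = (fun a b c => T a c b))
    (v u w : V) (hdeg : 3 ≤ (G.neighborSet v).ncard)
    (hu : G.Adj v u) (hw : G.Adj v w) (hT_uvw : T v u w) :
    (∀ α : G ≃g G, α u = u → α v = v → α w = w → ∀ x : V, α x = x) ∧
      IsFixingSet G {u, v, w} ∧ rigidityIndex G ≤ 3 := by
  classical
  have main : ∀ α : G ≃g G, α u = u → α v = v → α w = w → ∀ x : V, α x = x := by
    intro α hαu hαv hαw
    -- first, rule out the conjugate case
    have hpres : ∀ a b c, T a b c → T (α a) (α b) (α c) := by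
      rcases hfaithful α with h | h
      · intro a b c htc
        have h' := congrFun (congrFun (congrFun h (α a)) (α b)) (α c)
        simp only [RelIso.symm_apply_apply] at h'
        exact h' ▸ htc
      · exfalso
        have h' := congrFun (congrFun (congrFun h (α v)) (α u)) (α w)
        simp only [RelIso.symm_apply_apply] at h'
        have hT_vwu : T v w u := by
          rw [hαv, hαu, hαw] at h'
          exact h' ▸ hT_uvw
        -- reachability from u under T v stays in {u, w}
        have hreach_sub : ∀ y, Relation.ReflTransGen (fun p q => T v p q) u y →
            y = u ∨ y = w := by
          intro y hy
          induction hy with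
          | refl => exact Or.inl rfl
          | tail hst hstep ih =>
            rcases ih with h1 | h1 <;> rw [h1] at hstep
            · right
              obtain ⟨c, hc, hun⟩ := hT.existsUnique_succ v u hu
              exact (hun _ hstep).trans (hun w hT_uvw).symm
            · left
              obtain ⟨c, hc, hun⟩ := hT.existsUnique_succ v w hw
              exact (hun _ hstep).trans (hun u hT_vwu).symm
        -- there is a third neighbor
        have hnsub : ¬ (G.neighborSet v ⊆ {u, w}) := by
          intro hs
          have h1 := Set.ncard_le_ncard hs (Set.toFinite _)
          have h2 : ({u, w} : Set V).ncard ≤ 2 := by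
            refine le_trans (Set.ncard_insert_le _ _) ?_
            simp [Set.ncard_singleton]
          omega
        obtain ⟨x, hxadj, hxne⟩ := Set.not_subset.mp hnsub
        have hx := hreach_sub x (hT.single_cycle v u x hu hxadj)
        rcases hx with rfl | rfl
        · exact hxne (by simp)
        · exact hxne (by simp)
    -- an automorphism fixing two adjacent vertices fixes all neighbors of the first
    have fixnbr : ∀ a b, G.Adj a b → α a = a → α b = b →
        ∀ c, G.Adj a c → α c = c := by
      intro a b hab ha hb c hac
      have hr := hT.single_cycle a b c hab hac
      clear hac
      induction hr with
      | refl => exact hb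
      | tail hst hstep ih =>
        have h1 := hpres _ _ _ hstep
        rw [ha, ih] at h1
        obtain ⟨d, hd, hun⟩ := hT.existsUnique_succ _ _ (hT.adj_left _ _ _ hstep)
        exact (hun _ h1).trans (hun _ hstep).symm
    -- propagate along walks
    have key : ∀ a b : V, ∀ _ : G.Walk a b, α a = a → (∀ c, G.Adj a c → α c = c) →
        α b = b ∧ (∀ c, G.Adj b c → α c = c) := by
      intro a b p
      induction p with
      | nil => exact fun h1 h2 => ⟨h1, h2⟩
      | @cons a y b hadj q ih =>
        intro h1 h2
        have hy : α y = y := h2 _ hadj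
        have hy2 : ∀ c, G.Adj y c → α c = c := fixnbr y a hadj.symm hy h1
        exact ih hy hy2
    intro x
    obtain ⟨p⟩ := hconn.preconnected v x
    exact (key v x p hαv (fixnbr v u hu hαv hαu)).1
  have hfix : IsFixingSet G {u, v, w} := by
    intro α hα
    exact main α (hα u (by simp)) (hα v (by simp)) (hα w (by simp))
  refine ⟨main, hfix, ?_⟩
  have hmem : ({u, v, w} : Finset V).card ∈
      {n : ℕ | ∃ S : Finset V, S.card = n ∧ IsFixingSet G (S : Set V)} := by
    refine ⟨{u, v, w}, rfl, ?_⟩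
    simpa using hfix
  refine le_trans (Nat.sInf_le hmem) ?_
  have h1 := Finset.card_insert_le u ({v, w} : Finset V)
  have h2 := Finset.card_insert_le v ({w} : Finset V)
  simp only [Finset.card_singleton] at h2
  omega
end
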